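/- arXiv:1311.0451 — 4 statements merged into one kernel-verified Lean document; each statement's English description precedes it below -/
import Mathlib

section
/- Let (X,f) be a non-trivial non-wandering dynamical system with the shadowing property. If (X,f) is weakly mixing, then it has the strong Property P: for every n ≥ 2 and all nonempty open subsets U_0, …, U_{n-1} of X, there exists N ∈ ℕ such that for every k ≥ 2 and every s ∈ {0,…,n-1}^k there is x ∈ X with f^{(j-1)N}(x) ∈ U_{s(j)} for all j = 1,…,k. -/
open Set Function

variable {X : Type*}

/-- A `δ`-pseudo-orbit of `f`. -/
def IsPseudoOrbit [MetricSpace X] (f : X → X) (δ : ℝ) (x : ℕ → X) : Prop :=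
  ∀ n : ℕ, dist (f (x n)) (x (n + 1)) < δ

/-- `z` ε-traces the sequence `x`. -/
def Traces [MetricSpace X] (f : X → X) (ε : ℝ) (z : X) (x : ℕ → X) : Prop :=
  ∀ n : ℕ, dist (f^[n] z) (x n) < ε

/-- The shadowing property. -/
def HasShadowing [MetricSpace X] (f : X → X) : Prop :=
  ∀ ε > (0 : ℝ), ∃ δ > (0 : ℝ), ∀ x : ℕ → X, IsPseudoOrbit f δ x → ∃ z : X, Traces f ε z x

/-- The shadowing property of the restriction of `f` to an invariant set `S`. -/
def HasShadowingOn [MetricSpace X] (f : X → X) (S : Set X) : Prop :=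
  ∀ ε > (0 : ℝ), ∃ δ > (0 : ℝ), ∀ x : ℕ → X, (∀ n, x n ∈ S) → IsPseudoOrbit f δ x →
    ∃ z ∈ S, Traces f ε z x

/-- Non-wandering point. -/
def NonWanderingPt [TopologicalSpace X] (f : X → X) (x : X) : Prop :=
  ∀ U ∈ nhds x, ∃ k : ℕ, 1 ≤ k ∧ ∃ y ∈ U, f^[k] y ∈ U

/-- The (forward) orbit of a point. -/
def orbitSet (f : X → X) (x : X) : Set X := Set.range fun n : ℕ => f^[n] x

/-- Recurrent point. -/
def RecurrentPt [TopologicalSpace X] (f : X → X) (x : X) : Prop :=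
  ∀ U ∈ nhds x, ∃ k : ℕ, 1 ≤ k ∧ f^[k] x ∈ U

/-- Minimal point: every point of the orbit closure has `x` in its own orbit closure,
i.e. the orbit closure of `x` is a minimal set. -/
def MinimalPt [TopologicalSpace X] (f : X → X) (x : X) : Prop :=
  ∀ y ∈ closure (orbitSet f x), x ∈ closure (orbitSet f y)

/-- Regularly recurrent point. -/
def RegRecPt [TopologicalSpace X] (f : X → X) (x : X) : Prop :=
  ∀ U ∈ nhds x, ∃ k : ℕ, 1 ≤ k ∧ ∀ n : ℕ, f^[k * n] x ∈ U

/-- Equicontinuity of the family of iterates of `f`. -/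
def EquicontinuousMap [MetricSpace X] (f : X → X) : Prop :=
  ∀ ε > (0 : ℝ), ∃ δ > (0 : ℝ), ∀ x y : X, dist x y < δ →
    ∀ n : ℕ, dist (f^[n] x) (f^[n] y) < ε

/-- `u` is a sensitive point of the subsystem on `S`. -/
def SensitivePtOn [MetricSpace X] (f : X → X) (S : Set X) (u : X) : Prop :=
  ∃ δ > (0 : ℝ), ∀ U ∈ nhds u, ∃ n : ℕ, ∃ a ∈ U ∩ S, ∃ b ∈ U ∩ S,
    dist (f^[n] a) (f^[n] b) > δ

/-- `u` is a sensitive point of `(X,f)`. -/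
def SensitivePt [MetricSpace X] (f : X → X) (u : X) : Prop :=
  ∃ δ > (0 : ℝ), ∀ U ∈ nhds u, ∃ n : ℕ, ∃ a ∈ U, ∃ b ∈ U,
    dist (f^[n] a) (f^[n] b) > δ

/-- Topological transitivity. -/
def TopTransitive {Y : Type*} [TopologicalSpace Y] (g : Y → Y) : Prop :=
  ∀ U V : Set Y, IsOpen U → U.Nonempty → IsOpen V → V.Nonempty →
    ∃ n : ℕ, 1 ≤ n ∧ (g^[n] '' U ∩ V).Nonempty

/-- Weak mixing: the product system is transitive. -/
def WeaklyMixing [TopologicalSpace X] (f : X → X) : Prop :=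
  TopTransitive (fun p : X × X => (f p.1, f p.2))

/-- Strong mixing. -/
def StronglyMixing {Y : Type*} [TopologicalSpace Y] (g : Y → Y) : Prop :=
  ∀ U V : Set Y, IsOpen U → U.Nonempty → IsOpen V → V.Nonempty →
    ∃ N : ℕ, ∀ n ≥ N, (g^[n] '' U ∩ V).Nonempty

/-- The shift map on the full shift over `d` symbols. -/
def shiftMap (d : ℕ) : (ℕ → Fin d) → (ℕ → Fin d) := fun x n => x (n + 1)

/-- `π` is a factor map from the subsystem `(Y, f^[m])` onto the full shift on `d` symbols. -/
def FactorOntoShift [TopologicalSpace X] (f : X → X) (m : ℕ) (Y : Set X) (d : ℕ)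
    (π : X → (ℕ → Fin d)) : Prop :=
  ContinuousOn π Y ∧ π '' Y = Set.univ ∧ ∀ y ∈ Y, π (f^[m] y) = shiftMap d (π y)

/-! Weak mixing gives, around every point `p`, returns to a small neighbourhood at two
consecutive times `m` and `m + 1`; as `gcd (m, m + 1) = 1`, the point `p` carries `δ`-chain loops
of every large length, and hence any two points are joined by `δ`-chains of every large length.
Taking `N` large enough for all pairs of centres of the `U i`, an arbitrary itinerary `s` becomes a
`δ`-pseudo-orbit visiting the centres at the times `j * N`, and shadowing turns it into an orbit. -/

open Filter Metric Topology

section DeltaChain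

variable [MetricSpace X] {f : X → X} {δ : ℝ}

def DeltaChain (f : X → X) (δ : ℝ) (m : ℕ) (a b : X) : Prop :=
  ∃ c : ℕ → X, c 0 = a ∧ c m = b ∧ ∀ t < m, dist (f (c t)) (c (t + 1)) < δ

theorem DeltaChain.refl (f : X → X) (δ : ℝ) (a : X) : DeltaChain f δ 0 a a :=
  ⟨fun _ => a, rfl, rfl, fun _ ht => absurd ht (Nat.not_lt_zero _)⟩

theorem DeltaChain.single {a b : X} (h : dist (f a) b < δ) : DeltaChain f δ 1 a b :=
  ⟨fun t => if t = 0 then a else b, rfl, rfl, fun t ht => by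
    obtain rfl : t = 0 := by omega
    simpa using h⟩

theorem deltaChain_orbit (hδ : 0 < δ) (a : X) (m : ℕ) : DeltaChain f δ m a (f^[m] a) :=
  ⟨fun t => f^[t] a, rfl, rfl, fun t _ => by simpa [iterate_succ_apply'] using hδ⟩

theorem DeltaChain.trans {m m' : ℕ} {a b e : X} (h₁ : DeltaChain f δ m a b)
    (h₂ : DeltaChain f δ m' b e) : DeltaChain f δ (m + m') a e := by
  obtain ⟨c₁, hc₁0, hc₁m, hc₁⟩ := h₁
  obtain ⟨c₂, hc₂0, hc₂m, hc₂⟩ := h₂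
  set c : ℕ → X := fun t => if t ≤ m then c₁ t else c₂ (t - m)
  have hc_left : ∀ t ≤ m, c t = c₁ t := fun t ht => if_pos ht
  have hc_right : ∀ t, m ≤ t → c t = c₂ (t - m) := by
    intro t ht
    by_cases h : t ≤ m
    · obtain rfl : t = m := le_antisymm h ht
      rw [hc_left t le_rfl, hc₁m, Nat.sub_self, hc₂0]
    · exact if_neg h
  refine ⟨c, by rw [hc_left 0 (Nat.zero_le _), hc₁0], by rw [hc_right _ le_self_add,
    Nat.add_sub_cancel_left, hc₂m], fun t ht => ?_⟩
  by_cases h : t < m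
  · rw [hc_left t h.le, hc_left (t + 1) h]
    exact hc₁ t h
  · rw [hc_right t (by omega), hc_right (t + 1) (by omega), Nat.sub_add_comm (by omega)]
    exact hc₂ (t - m) (by omega)

theorem DeltaChain.loop_mul {m : ℕ} {a : X} (h : DeltaChain f δ m a a) (k : ℕ) :
    DeltaChain f δ (k * m) a a := by
  induction k with
  | zero => simpa using DeltaChain.refl f δ a
  | succ k ih => simpa [Nat.succ_mul] using ih.trans h

theorem deltaChain_of_near_orbit {m : ℕ} (hm : 1 ≤ m) {p q a : X}
    (hp : dist (f a) (f p) < δ / 2) (hq : dist (f^[m] a) q < δ / 2) : DeltaChain f δ m p q := by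
  rw [dist_comm] at hp
  have hδ : 0 < δ := by linarith [dist_nonneg (x := f p) (y := f a)]
  obtain rfl | ⟨k, rfl⟩ : m = 1 ∨ ∃ k, m = k + 2 := by
    rcases m with _ | _ | k <;> simp_all
  · refine DeltaChain.single ?_
    calc dist (f p) q ≤ dist (f p) (f a) + dist (f a) q := dist_triangle _ _ _
      _ < δ := by simp only [iterate_one] at hq; linarith
  · have h₁ := ((DeltaChain.single (f := f) (hp.trans (half_lt_self hδ))).trans
      (deltaChain_orbit hδ (f a) k)).trans (DeltaChain.single (b := q) ?_)
    · rwa [add_comm 1 k] at h₁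
    · rw [← iterate_succ_apply f, ← iterate_succ_apply' f]
      exact hq.trans (half_lt_self hδ)

theorem eventually_deltaChain_of_loops {n : ℕ} {a : X} (hn : 1 ≤ n)
    (h₁ : DeltaChain f δ n a a) (h₂ : DeltaChain f δ (n + 1) a a) :
    ∀ᶠ m in atTop, DeltaChain f δ m a a := by
  refine eventually_atTop.2 ⟨n * n, fun m hm => ?_⟩
  have hr : m % n < n := Nat.mod_lt _ hn
  have hq : n ≤ m / n := (Nat.le_div_iff_mul_le hn).2 hm
  obtain ⟨d, hd⟩ := Nat.exists_eq_add_of_le (hr.le.trans hq)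
  -- `m = n * (m / n) + m % n = d * n + (m % n) * (n + 1)`
  have hm_eq : d * n + m % n * (n + 1) = m := by
    have := Nat.div_add_mod m n
    rw [hd] at this
    linarith
  rw [← hm_eq]
  exact (h₁.loop_mul d).trans (h₂.loop_mul _)

theorem DeltaChain.eventually_of_eventually_loop {m : ℕ} {a b : X} (h : DeltaChain f δ m a b)
    (hloop : ∀ᶠ n in atTop, DeltaChain f δ n a a) : ∀ᶠ n in atTop, DeltaChain f δ n a b := by
  filter_upwards [(tendsto_sub_atTop_nat m).eventually hloop, eventually_ge_atTop m] with n hn hmn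
  simpa [Nat.sub_add_cancel hmn] using hn.trans h

theorem exists_isPseudoOrbit_of_deltaChain {N : ℕ} (hN : 1 ≤ N) (q : ℕ → X)
    (h : ∀ j, DeltaChain f δ N (q j) (q (j + 1))) :
    ∃ x : ℕ → X, IsPseudoOrbit f δ x ∧ ∀ j, x (j * N) = q j := by
  choose c hc0 hcN hc using h
  set x : ℕ → X := fun t => c (t / N) (t % N)
  have hx : ∀ j, ∀ r ≤ N, x (N * j + r) = c j r := by
    intro j r hr
    rcases hr.lt_or_eq with hr | rfl
    · simp only [x, Nat.mul_add_div hN, Nat.mul_add_mod, Nat.div_eq_of_lt hr,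
        Nat.mod_eq_of_lt hr, add_zero]
    · simp only [x, ← Nat.mul_succ, Nat.mul_div_cancel_left _ hN, Nat.mul_mod_right, hc0, hcN]
  refine ⟨x, fun t => ?_, fun j => by rw [mul_comm, ← add_zero (N * j), hx j 0 (Nat.zero_le _),
    hc0]⟩
  have hr : t % N < N := Nat.mod_lt _ hN
  have h₀ := hx (t / N) (t % N) hr.le
  have h₁ := hx (t / N) (t % N + 1) hr
  rw [Nat.div_add_mod] at h₀
  rw [← add_assoc, Nat.div_add_mod] at h₁
  rw [h₀, h₁]
  exact hc _ _ hr

end DeltaChain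

theorem WeaklyMixing.exists_common_iterate [TopologicalSpace X] {f : X → X}
    (hwm : WeaklyMixing f) {A B C D : Set X} (hA : IsOpen A) (hA' : A.Nonempty)
    (hB : IsOpen B) (hB' : B.Nonempty) (hC : IsOpen C) (hC' : C.Nonempty)
    (hD : IsOpen D) (hD' : D.Nonempty) :
    ∃ m, 1 ≤ m ∧ (∃ a ∈ A, f^[m] a ∈ B) ∧ (∃ c ∈ C, f^[m] c ∈ D) := by
  obtain ⟨m, hm, _, ⟨w, hw, rfl⟩, hwBD⟩ :=
    hwm _ _ (hA.prod hC) (hA'.prod hC') (hB.prod hD) (hB'.prod hD')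
  rw [show (fun p : X × X => (f p.1, f p.2)) = Prod.map f f from rfl, Prod.map_iterate] at hwBD
  exact ⟨m, hm, ⟨w.1, hw.1, hwBD.1⟩, ⟨w.2, hw.2, hwBD.2⟩⟩

theorem WeaklyMixing.preimage_nonempty [TopologicalSpace X] {f : X → X} (hwm : WeaklyMixing f)
    {V : Set X} (hV : IsOpen V) (hV' : V.Nonempty) : (f ⁻¹' V).Nonempty := by
  obtain ⟨m, hm, ⟨a, -, ha⟩, -⟩ := hwm.exists_common_iterate hV hV' hV hV' hV hV' hV hV'
  refine ⟨f^[m - 1] a, ?_⟩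
  rwa [mem_preimage, ← iterate_succ_apply' f, Nat.succ_eq_add_one, Nat.sub_add_cancel hm]

theorem WeaklyMixing.eventually_deltaChain [MetricSpace X] {f : X → X} (hwm : WeaklyMixing f)
    (hf : Continuous f) {δ : ℝ} (hδ : 0 < δ) (p q : X) :
    ∀ᶠ N in atTop, DeltaChain f δ N p q := by
  set V := ball p (δ / 2) ∩ f ⁻¹' ball (f p) (δ / 2)
  have hV : IsOpen V := isOpen_ball.inter (isOpen_ball.preimage hf)
  have hpV : p ∈ V := ⟨mem_ball_self (half_pos hδ), mem_ball_self (half_pos hδ)⟩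
  have hfV : IsOpen (f ⁻¹' V) := hV.preimage hf
  have hV' : V.Nonempty := ⟨p, hpV⟩
  have hq : IsOpen (ball q (δ / 2)) := isOpen_ball
  have hq' : (ball q (δ / 2)).Nonempty := nonempty_ball.2 (half_pos hδ)
  obtain ⟨m, hm, ⟨a, ha, ha'⟩, ⟨b, hb, hb'⟩⟩ :=
    hwm.exists_common_iterate hV hV' hV hV' hV hV' hfV (hwm.preimage_nonempty hV hV')
  rw [mem_preimage, ← iterate_succ_apply' f] at hb'
  have hloop : ∀ᶠ n in atTop, DeltaChain f δ n p p :=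
    eventually_deltaChain_of_loops hm (deltaChain_of_near_orbit hm ha.2 ha'.1)
      (deltaChain_of_near_orbit (by omega) hb.2 hb'.1)
  obtain ⟨k, hk, ⟨c, hc, hc'⟩, -⟩ := hwm.exists_common_iterate hV hV' hq hq' hV hV' hV hV'
  exact (deltaChain_of_near_orbit hk hc.2 hc').eventually_of_eventually_loop hloop

theorem exists_pos_forall_ball_subset [MetricSpace X] {ι : Type*} [Finite ι] {x : ι → X}
    {U : ι → Set X} (hU : ∀ i, U i ∈ 𝓝 (x i)) : ∃ ε > 0, ∀ i, ball (x i) ε ⊆ U i := by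
  have : ∀ᶠ ε in 𝓝[>] (0 : ℝ), ∀ i, ball (x i) ε ⊆ U i := by
    refine eventually_all.2 fun i => ?_
    obtain ⟨r, hr, hrU⟩ := Metric.mem_nhds_iff.1 (hU i)
    filter_upwards [Ioo_mem_nhdsGT hr] with ε hε using (ball_subset_ball hε.2.le).trans hrU
  exact (this.and self_mem_nhdsWithin).exists.imp fun ε h => ⟨h.2, h.1⟩

theorem weak_mixing_strong_property_P_general [MetricSpace X]
    (f : X → X) (hf : Continuous f) (hsh : HasShadowing f)
    (hwm : WeaklyMixing f) :
    ∀ n : ℕ, 2 ≤ n → ∀ U : Fin n → Set X,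
      (∀ i, IsOpen (U i) ∧ (U i).Nonempty) →
      ∃ N : ℕ, 1 ≤ N ∧ ∀ k : ℕ, 2 ≤ k → ∀ s : Fin k → Fin n,
        ∃ x : X, ∀ j : Fin k, f^[(j : ℕ) * N] x ∈ U (s j) := by
  intro n _ U hU
  choose p hp using fun i => (hU i).2
  obtain ⟨ε, hε, hball⟩ := exists_pos_forall_ball_subset fun i => (hU i).1.mem_nhds (hp i)
  obtain ⟨δ, hδ, hshadow⟩ := hsh ε hε
  have hchains : ∀ᶠ N in atTop, 1 ≤ N ∧ ∀ i j, DeltaChain f δ N (p i) (p j) :=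
    (eventually_ge_atTop 1).and <| eventually_all.2 fun i => eventually_all.2 fun j =>
      hwm.eventually_deltaChain hf hδ (p i) (p j)
  obtain ⟨N, hN, hNchain⟩ := hchains.exists
  refine ⟨N, hN, fun k hk s => ?_⟩
  -- the itinerary `s`, extended constantly beyond its last entry
  set q : ℕ → X := fun j => p (s ⟨min j (k - 1), by omega⟩)
  obtain ⟨x, hx, hxq⟩ := exists_isPseudoOrbit_of_deltaChain hN q fun j => hNchain _ _
  obtain ⟨z, hz⟩ := hshadow x hx
  refine ⟨z, fun j => hball (s j) ?_⟩
  have hqj : q j = p (s j) := by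
    simp only [q]
    congr 3
    have := j.isLt
    omega
  simpa [hxq, hqj] using hz (j * N)

theorem weak_mixing_strong_property_P [MetricSpace X] [CompactSpace X]
    (f : X → X) (hf : Continuous f) (hX : ∃ x y : X, x ≠ y)
    (hnw : ∀ x : X, NonWanderingPt f x) (hsh : HasShadowing f)
    (hwm : WeaklyMixing f) :
    ∀ n : ℕ, 2 ≤ n → ∀ U : Fin n → Set X,
      (∀ i, IsOpen (U i) ∧ (U i).Nonempty) →
      ∃ N : ℕ, 1 ≤ N ∧ ∀ k : ℕ, 2 ≤ k → ∀ s : Fin k → Fin n,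
        ∃ x : X, ∀ j : Fin k, f^[(j : ℕ) * N] x ∈ U (s j) :=
  weak_mixing_strong_property_P_general f hf hsh hwm
end

section
/- Let (X,f) be a weakly mixing dynamical system with the shadowing property. Then (X,f) has the specification property: for every ε>0 there exists M>0 such that for every k ≥ 2, points x_1,…,x_k ∈ X, and integers 0 ≤ a_1 ≤ b_1 < a_2 ≤ b_2 < … < a_k ≤ b_k with a_i − b_{i−1} ≥ M for i = 2,…,k, there exists z ∈ X with d(f^j(z), f^j(x_i)) < ε for all a_i ≤ j ≤ b_i and 1 ≤ i ≤ k. -/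
open Set Function

variable {X : Type*}

/-!
Weak mixing makes `f` chain mixing: two orbits in the product system produce `ε`-chains of two
consecutive lengths between any two points, so the loops at a point have all sufficiently large
lengths, and compactness bounds the lengths needed to reach that point and to leave it. Given
orbit segments separated by gaps of at least the chain-mixing constant for `δ`, joining each
segment to the next by a `δ`-chain yields a `δ`-pseudo-orbit, and a point shadowing it traces
every segment.
-/

def splice (u : ℕ → X) (B : ℕ) (v : ℕ → X) : ℕ → X :=
  fun j => if j ≤ B then u j else v (j - B)

section Splice

variable {u v : ℕ → X} {B j : ℕ}

lemma splice_of_le (h : j ≤ B) : splice u B v j = u j := if_pos h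

lemma splice_of_ge (h0 : v 0 = u B) (h : B ≤ j) : splice u B v j = v (j - B) := by
  unfold splice
  split_ifs with h'
  · obtain rfl : j = B := le_antisymm h' h
    simp [h0]
  · rfl

variable [MetricSpace X] {f : X → X} {δ : ℝ}

lemma dist_splice_lt {L : ℕ} (hu : ∀ j < B, dist (f (u j)) (u (j + 1)) < δ)
    (hv : ∀ j < L, dist (f (v j)) (v (j + 1)) < δ) (h0 : v 0 = u B) :
    ∀ j < B + L, dist (f (splice u B v j)) (splice u B v (j + 1)) < δ := by
  intro j hj
  rcases lt_or_ge j B with hjB | hBj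
  · rw [splice_of_le hjB.le, splice_of_le hjB]
    exact hu j hjB
  · rw [splice_of_ge h0 hBj, splice_of_ge h0 (by omega), Nat.sub_add_comm hBj]
    exact hv _ (by omega)

lemma isPseudoOrbit_splice (hu : ∀ j < B, dist (f (u j)) (u (j + 1)) < δ)
    (hv : IsPseudoOrbit f δ v) (h0 : v 0 = u B) : IsPseudoOrbit f δ (splice u B v) :=
  fun j => dist_splice_lt (L := j + 1) hu (fun i _ => hv i) h0 j (by omega)

end Splice

lemma isPseudoOrbit_iterate [MetricSpace X] {f : X → X} {δ : ℝ} (hδ : 0 < δ) (x : X) :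
    IsPseudoOrbit f δ (fun j => f^[j] x) :=
  fun j => by simpa [iterate_succ_apply'] using hδ

def Chain [MetricSpace X] (f : X → X) (ε : ℝ) (x y : X) (n : ℕ) : Prop :=
  ∃ c : ℕ → X, c 0 = x ∧ c n = y ∧ ∀ i < n, dist (f (c i)) (c (i + 1)) < ε

section Chain

variable [MetricSpace X] {f : X → X} {ε : ℝ} {x y z : X} {n m : ℕ}

lemma chain_zero (x : X) : Chain f ε x x 0 :=
  ⟨fun _ => x, rfl, rfl, fun _ hi => absurd hi (Nat.not_lt_zero _)⟩

lemma chain_one (h : dist (f x) y < ε) : Chain f ε x y 1 :=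
  ⟨fun i => if i = 0 then x else y, rfl, rfl,
    fun i hi => by simpa [Nat.lt_one_iff.1 hi] using h⟩

lemma chain_iterate (hε : 0 < ε) (x : X) (n : ℕ) : Chain f ε x (f^[n] x) n :=
  ⟨_, rfl, rfl, fun i _ => isPseudoOrbit_iterate hε x i⟩

lemma Chain.trans (h₁ : Chain f ε x y n) (h₂ : Chain f ε y z m) : Chain f ε x z (n + m) := by
  obtain ⟨c, hc0, hcn, hc⟩ := h₁
  obtain ⟨d, hd0, hdm, hd⟩ := h₂
  have h0 : d 0 = c n := hd0.trans hcn.symm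
  refine ⟨splice c n d, ?_, ?_, dist_splice_lt hc hd h0⟩
  · rw [splice_of_le n.zero_le, hc0]
  · rw [splice_of_ge h0 (Nat.le_add_right n m), Nat.add_sub_cancel_left, hdm]

lemma chain_succ_iff_exists_dist_lt_and_chain :
    Chain f ε x z (n + 1) ↔ ∃ y, dist (f x) y < ε ∧ Chain f ε y z n := by
  constructor
  · rintro ⟨c, hc0, hcn, hc⟩
    exact ⟨c 1, hc0 ▸ hc 0 n.succ_pos, fun i => c (i + 1), rfl, hcn,
      fun i hi => hc (i + 1) (by omega)⟩
  · rintro ⟨y, hxy, hyz⟩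
    simpa only [add_comm 1 n] using (chain_one hxy).trans hyz

lemma chain_succ_iff_exists_chain_and_dist_lt :
    Chain f ε x z (n + 1) ↔ ∃ y, Chain f ε x y n ∧ dist (f y) z < ε := by
  constructor
  · rintro ⟨c, hc0, hcn, hc⟩
    exact ⟨c n, ⟨c, hc0, rfl, fun i hi => hc i (by omega)⟩, hcn ▸ hc n (lt_add_one n)⟩
  · rintro ⟨y, hxy, hyz⟩
    exact hxy.trans (chain_one hyz)

lemma chain_of_dist_iterate_lt (hε : 0 < ε) (h : dist (f^[n + 1] x) y < ε) :
    Chain f ε x y (n + 1) :=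
  chain_succ_iff_exists_chain_and_dist_lt.2
    ⟨_, chain_iterate hε x n, by rwa [← iterate_succ_apply' f n x]⟩

lemma isOpen_setOf_chain_succ_to (hf : Continuous f) (z : X) (n : ℕ) :
    IsOpen {x | Chain f ε x z (n + 1)} := by
  refine isOpen_iff_mem_nhds.2 fun x hx => ?_
  obtain ⟨y, hxy, hyz⟩ := chain_succ_iff_exists_dist_lt_and_chain.1 hx
  filter_upwards [(hf.dist continuous_const).continuousAt.eventually_lt continuousAt_const hxy]
    with x' hx'
  exact chain_succ_iff_exists_dist_lt_and_chain.2 ⟨y, hx', hyz⟩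

lemma isOpen_setOf_chain_succ_from (x : X) (n : ℕ) : IsOpen {z | Chain f ε x z (n + 1)} := by
  refine isOpen_iff_mem_nhds.2 fun z hz => ?_
  obtain ⟨y, hxy, hyz⟩ := chain_succ_iff_exists_chain_and_dist_lt.1 hz
  filter_upwards [(continuous_const.dist continuous_id).continuousAt.eventually_lt
    continuousAt_const hyz] with z' hz'
  exact chain_succ_iff_exists_chain_and_dist_lt.2 ⟨y, hxy, hz'⟩

variable (f ε) in
def loopLengths (y : X) : AddSubmonoid ℕ where
  carrier := {n | Chain f ε y y n}
  zero_mem' := chain_zero y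
  add_mem' := Chain.trans

end Chain

def ChainMixing [MetricSpace X] (f : X → X) : Prop :=
  ∀ ε > (0 : ℝ), ∃ M : ℕ, ∀ x y : X, ∀ n, M ≤ n → Chain f ε x y n

lemma CompactSpace.exists_bound_of_isOpen_cover [TopologicalSpace X] [CompactSpace X]
    {S : ℕ → Set X} (hS : ∀ n, IsOpen (S n)) (hcov : ∀ x, ∃ n, x ∈ S n) :
    ∃ N, ∀ x, ∃ n ≤ N, x ∈ S n := by
  obtain ⟨t, ht⟩ := isCompact_univ.elim_finite_subcover S hS fun x _ => mem_iUnion.2 (hcov x)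
  refine ⟨t.sup id, fun x => ?_⟩
  obtain ⟨n, hnt, hxn⟩ := mem_iUnion₂.1 (ht (mem_univ x))
  exact ⟨n, Finset.le_sup (f := id) hnt, hxn⟩

namespace WeaklyMixing

variable [MetricSpace X] {f : X → X} {ε : ℝ}

lemma exists_chain_and_chain_succ (hwm : WeaklyMixing f) (hε : 0 < ε) (p q : X) :
    ∃ n, Chain f ε p q n ∧ Chain f ε p q (n + 1) := by
  obtain ⟨N, hN, _, ⟨⟨u, v⟩, ⟨hu, hv⟩, rfl⟩, hNu, hNv⟩ :=
    hwm (Metric.ball (f p) ε ×ˢ Metric.ball (f (f p)) ε)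
      (Metric.ball q ε ×ˢ Metric.ball q ε)
      (Metric.isOpen_ball.prod Metric.isOpen_ball) ⟨(f p, f (f p)), by simp [hε]⟩
      (Metric.isOpen_ball.prod Metric.isOpen_ball) ⟨(q, q), by simp [hε]⟩
  obtain ⟨n, rfl⟩ := Nat.exists_eq_add_of_le' hN
  simp only [show (fun p : X × X => (f p.1, f p.2)) = Prod.map f f from rfl, Prod.map_iterate,
    Prod.map_fst, Prod.map_snd, Metric.mem_ball] at hu hv hNu hNv
  -- `p → u → ⋯ → f^[n] u → q` and `p → f p → v → ⋯ → f^[n] v → q`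
  refine ⟨n + 2, chain_succ_iff_exists_dist_lt_and_chain.2
    ⟨u, by rwa [dist_comm], chain_of_dist_iterate_lt hε hNu⟩, ?_⟩
  refine chain_succ_iff_exists_dist_lt_and_chain.2 ⟨f p, by simpa using hε, ?_⟩
  exact chain_succ_iff_exists_dist_lt_and_chain.2
    ⟨v, by rwa [dist_comm], chain_of_dist_iterate_lt hε hNv⟩

lemma exists_forall_ge_chain_loop (hwm : WeaklyMixing f) (hε : 0 < ε) (y : X) :
    ∃ L, ∀ n ≥ L, Chain f ε y y n := by
  obtain ⟨m, hm, hm'⟩ := hwm.exists_chain_and_chain_succ hε y y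
  obtain ⟨L, hL⟩ := Nat.exists_mem_closure_of_ge {m, m + 1}
  have hgcd : Nat.setGcd {m, m + 1} ∣ 1 :=
    (Nat.dvd_add_right (Nat.setGcd_dvd_of_mem (mem_insert _ _))).1
      (Nat.setGcd_dvd_of_mem (mem_insert_of_mem _ rfl))
  have hle : AddSubmonoid.closure {m, m + 1} ≤ loopLengths f ε y :=
    AddSubmonoid.closure_le.2 (insert_subset_iff.2 ⟨hm, singleton_subset_iff.2 hm'⟩)
  exact ⟨L, fun n hn => hle (hL n hn (hgcd.trans (one_dvd n)))⟩

theorem chainMixing [CompactSpace X] (hwm : WeaklyMixing f) (hf : Continuous f) :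
    ChainMixing f := by
  intro ε hε
  rcases isEmpty_or_nonempty X with hX | ⟨⟨y₀⟩⟩
  · exact ⟨0, fun x => isEmptyElim x⟩
  obtain ⟨L, hL⟩ := hwm.exists_forall_ge_chain_loop hε y₀
  obtain ⟨N₁, hN₁⟩ := CompactSpace.exists_bound_of_isOpen_cover
    (isOpen_setOf_chain_succ_to (ε := ε) hf y₀)
    fun x => ⟨_, (hwm.exists_chain_and_chain_succ hε x y₀).choose_spec.2⟩
  obtain ⟨N₂, hN₂⟩ := CompactSpace.exists_bound_of_isOpen_cover
    (isOpen_setOf_chain_succ_from (f := f) (ε := ε) y₀)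
    fun y => ⟨_, (hwm.exists_chain_and_chain_succ hε y₀ y).choose_spec.2⟩
  refine ⟨N₁ + 1 + L + (N₂ + 1), fun x y n hn => ?_⟩
  obtain ⟨n₁, hn₁, hx⟩ := hN₁ x
  obtain ⟨n₂, hn₂, hy⟩ := hN₂ y
  have hxy := (hx.trans (hL (n - (n₁ + 1) - (n₂ + 1)) (by omega))).trans hy
  rwa [show n₁ + 1 + (n - (n₁ + 1) - (n₂ + 1)) + (n₂ + 1) = n by omega] at hxy

end WeaklyMixing

lemma end_le_start_of_ordered_segments {a b : ℕ → ℕ} {M n : ℕ} (hab : ∀ i < n, a i ≤ b i)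
    (hgap : ∀ i < n, b i + M ≤ a (i + 1)) : ∀ i < n, b i ≤ a n := by
  induction n with
  | zero => intro i hi; omega
  | succ n ih =>
    intro i hi
    have hn := hgap n (lt_add_one n)
    rcases Nat.lt_succ_iff_lt_or_eq.1 hi with hi | rfl
    · have hi' := ih (fun i hi => hab i (by omega)) (fun i hi => hgap i (by omega)) i hi
      have hab_n := hab n (lt_add_one n)
      omega
    · omega

lemma exists_isPseudoOrbit_through_segments [MetricSpace X] {f : X → X} {δ : ℝ} (hδ : 0 < δ)
    {M : ℕ} (hM : ∀ x y : X, ∀ n, M ≤ n → Chain f δ x y n)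
    (x : ℕ → X) (a b : ℕ → ℕ) :
    ∀ n, (∀ i < n, a i ≤ b i) → (∀ i < n, b i + M ≤ a (i + 1)) →
      ∃ w, IsPseudoOrbit f δ w ∧
        (∀ i < n, ∀ j, a i ≤ j → j ≤ b i → w j = f^[j] (x i)) ∧
        ∀ j, a n ≤ j → w j = f^[j] (x n) := by
  intro n
  induction n with
  | zero => exact fun _ _ => ⟨_, isPseudoOrbit_iterate hδ (x 0), by simp, fun _ _ => rfl⟩
  | succ n ih =>
    intro hab hgap
    have hab' : ∀ i < n, a i ≤ b i := fun i hi => hab i (by omega)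
    have hgap' : ∀ i < n, b i + M ≤ a (i + 1) := fun i hi => hgap i (by omega)
    obtain ⟨w, hw, hseg, htail⟩ := ih hab' hgap'
    have hbn : ∀ i < n, b i ≤ b n := fun i hi =>
      (end_le_start_of_ordered_segments hab' hgap' i hi).trans (hab n (lt_add_one n))
    have hBA := hgap n (lt_add_one n)
    obtain ⟨c, hc0, hcL, hc⟩ :=
      hM (f^[b n] (x n)) (f^[a (n + 1)] (x (n + 1))) (a (n + 1) - b n) (by omega)
    -- `c` bridges the gap after segment `n`; `v` continues it along the orbit of `x (n + 1)`
    set v := splice c (a (n + 1) - b n) fun j => f^[j] (f^[a (n + 1)] (x (n + 1))) with hv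
    have hv0 : v 0 = w (b n) := by
      rw [hv, splice_of_le (Nat.zero_le _), hc0, htail _ (hab n (lt_add_one n))]
    refine ⟨splice w (b n) v, isPseudoOrbit_splice (fun j _ => hw j) ?_ hv0, ?_, ?_⟩
    · exact isPseudoOrbit_splice hc (isPseudoOrbit_iterate hδ _) hcL.symm
    · intro i hi j hj₁ hj₂
      rcases Nat.lt_succ_iff_lt_or_eq.1 hi with hi | rfl
      · rw [splice_of_le (hj₂.trans (hbn i hi)), hseg i hi j hj₁ hj₂]
      · rw [splice_of_le hj₂, htail j hj₁]
    · intro j hj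
      rw [splice_of_ge hv0 (by omega), hv, splice_of_ge hcL.symm (by omega), ← iterate_add_apply]
      congr 1
      omega

theorem weak_mixing_shadowing_specification [MetricSpace X] [CompactSpace X]
    (f : X → X) (hf : Continuous f) (hwm : WeaklyMixing f) (hsh : HasShadowing f) :
    ∀ ε > (0 : ℝ), ∃ M : ℕ, 0 < M ∧
      ∀ k : ℕ, 2 ≤ k → ∀ x : ℕ → X, ∀ a b : ℕ → ℕ,
        (∀ i < k, a i ≤ b i) →
        (∀ i, i + 1 < k → b i + M ≤ a (i + 1)) →
        ∃ z : X, ∀ i < k, ∀ j : ℕ, a i ≤ j → j ≤ b i →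
          dist (f^[j] z) (f^[j] (x i)) < ε := by
  intro ε hε
  obtain ⟨δ, hδ, hshadow⟩ := hsh ε hε
  obtain ⟨M, hM⟩ := hwm.chainMixing hf δ hδ
  refine ⟨M + 1, M.succ_pos, fun k _ x a b hab hgap => ?_⟩
  obtain ⟨w, hw, hseg, htail⟩ := exists_isPseudoOrbit_through_segments hδ hM x a b (k - 1)
    (fun i hi => hab i (by omega)) fun i hi => by have := hgap i (by omega); omega
  obtain ⟨z, hz⟩ := hshadow w hw
  refine ⟨z, fun i hi j hj₁ hj₂ => ?_⟩
  have hwj : w j = f^[j] (x i) := by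
    rcases Nat.lt_or_ge i (k - 1) with hi' | hi'
    · exact hseg i hi' j hj₁ hj₂
    · obtain rfl : i = k - 1 := by omega
      exact htail j hj₁
  exact hwj ▸ hz j
end

section
/- Let (X,f) be a weakly mixing dynamical system with the shadowing property. For every ε>0 there exists M>0 such that for all k ≥ 2, points x_1,…,x_k ∈ X, integers 0 ≤ a_1 ≤ b_1 < a_2 ≤ b_2 < … < a_k ≤ b_k with a_i − b_{i−1} ≥ M for i = 2,…,k, and every p ≥ M + b_k − a_1, there exists a regularly recurrent point z ∈ X such that d(f^j(z), f^{np+j}(z)) < ε for all n, j ≥ 0 and d(f^{np+j}(z), f^j(x_i)) < ε for all a_i ≤ j ≤ b_i, 1 ≤ i ≤ k, and n ≥ 0. -/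
/-!
Weak mixing and compactness make `f` chain mixing: for every `δ > 0` any two points are joined
by `δ`-chains of every length `≥ M`. Gluing the orbit segments of the `x i` by such chains and
closing up after `p` steps gives a `p`-periodic `δ`-pseudo-orbit `ξ`. Among the points shadowing
`ξ`, Birkhoff's recurrence theorem for `f^[p]` provides one, `z₀`, recurrent under `f^[p]`.
The orbit of a recurrent point up to an almost-return time `q` is itself a `q`-periodic
pseudo-orbit, so the step repeats: it yields points `Z s` recurrent under `f^[Q s]` with
`Q s ∣ Q (s + 1)`, each tracing the periodised orbit of its predecessor within `e / 2 ^ (s + 1)`.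
The limit of the `Z s` returns close to itself along all multiples of each `Q s`, i.e. it is
regularly recurrent, and it stays close to `ξ`.
-/

open Set Function

variable {X : Type*}

def IsPseudoOrbitOn [MetricSpace X] (f : X → X) (δ : ℝ) (g : ℕ → X) (s e : ℕ) : Prop :=
  ∀ t, s ≤ t → t < e → dist (f (g t)) (g (t + 1)) < δ

def JoinedByChain [MetricSpace X] (f : X → X) (δ : ℝ) (n : ℕ) (u v : X) : Prop :=
  ∃ g : ℕ → X, g 0 = u ∧ g n = v ∧ IsPseudoOrbitOn f δ g 0 n

section Chains

variable [MetricSpace X] {f : X → X} {δ : ℝ}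

theorem IsPseudoOrbitOn.iterate (hδ : 0 < δ) (x : X) (s e : ℕ) :
    IsPseudoOrbitOn f δ (fun t => f^[t] x) s e := fun t _ _ => by
  simpa only [iterate_succ_apply', dist_self] using hδ

theorem IsPseudoOrbitOn.piecewise {g₁ g₂ : ℕ → X} {s m e : ℕ}
    (h₁ : IsPseudoOrbitOn f δ g₁ s m) (h₂ : IsPseudoOrbitOn f δ g₂ m e) (hm : g₁ m = g₂ m) :
    IsPseudoOrbitOn f δ (fun t => if t ≤ m then g₁ t else g₂ t) s e := by
  intro t hs he
  rcases lt_or_ge t m with htm | hmt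
  · simpa only [htm.le, Nat.succ_le_of_lt htm, if_true] using h₁ t hs htm
  · have hg : (if t ≤ m then g₁ t else g₂ t) = g₂ t := by
      split_ifs with htm'
      · rw [le_antisymm htm' hmt, hm]
      · rfl
    simpa only [hg, show ¬t + 1 ≤ m by omega, if_false] using h₂ t hmt he

theorem IsPseudoOrbitOn.comp_sub {g : ℕ → X} {s e : ℕ} (h : IsPseudoOrbitOn f δ g s e)
    (r : ℕ) :
    IsPseudoOrbitOn f δ (fun t => g (t - r)) (s + r) (e + r) := fun t hs he => by
  simpa only [show t + 1 - r = t - r + 1 by omega] using h (t - r) (by omega) (by omega)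

theorem isPseudoOrbit_comp_mod {c : ℕ → X} {p : ℕ} (hp : 0 < p)
    (hc : ∀ t < p, dist (f (c t)) (c ((t + 1) % p)) < δ) (r : ℕ) :
    IsPseudoOrbit f δ (fun t => c ((t + r) % p)) := fun t => by
  simpa only [Nat.mod_add_mod, Nat.add_right_comm t 1 r] using hc _ (Nat.mod_lt (t + r) hp)

theorem isPseudoOrbit_iterate_mod {q : ℕ} {z : X} (hq : 0 < q) (hδ : 0 < δ)
    (hz : dist (f^[q] z) z < δ) : IsPseudoOrbit f δ (fun t => f^[t % q] z) := by
  have hstep : ∀ t < q, dist (f (f^[t] z)) (f^[(t + 1) % q] z) < δ := fun t ht => by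
    rw [← iterate_succ_apply' f t]
    by_cases ht' : t + 1 = q
    · rw [ht', Nat.mod_self, iterate_zero_apply]
      rwa [← ht'] at hz
    · rwa [Nat.mod_eq_of_lt (show t + 1 < q by omega), dist_self]
  simpa only [add_zero] using isPseudoOrbit_comp_mod hq hstep 0

theorem IsPseudoOrbitOn.exists_periodic {c : ℕ → X} {s p : ℕ}
    (hc : IsPseudoOrbitOn f δ c s (s + p)) (hp : 0 < p) (hcs : c (s + p) = c s) :
    ∃ ξ : ℕ → X, IsPseudoOrbit f δ ξ ∧ Periodic ξ p ∧ ∀ t, s ≤ t → t < s + p → ξ t = c t := by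
  have hstep : ∀ t < p, dist (f (c (s + t))) (c (s + (t + 1) % p)) < δ := fun t ht => by
    by_cases ht' : t + 1 = p
    · rw [ht', Nat.mod_self, add_zero, ← hcs, ← ht']
      exact hc (s + t) (by omega) (by omega)
    · rw [Nat.mod_eq_of_lt (by omega)]
      exact hc (s + t) (by omega) (by omega)
  -- `s * (p - 1) ≡ -s [MOD p]`: the index is `s + (t - s) mod p`, without truncated subtraction.
  refine ⟨fun t => c (s + (t + s * (p - 1)) % p), isPseudoOrbit_comp_mod hp hstep _,
    fun t => by simp only [Nat.add_right_comm t p, Nat.add_mod_right], fun t hst hts => ?_⟩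
  have hps : s * (p - 1) + s = s * p := by
    rw [Nat.mul_sub_one]
    have := Nat.le_mul_of_pos_right s hp
    omega
  dsimp only
  rw [show t + s * (p - 1) = t - s + s * p by omega, Nat.add_mul_mod_self_right,
    Nat.mod_eq_of_lt (by omega), Nat.add_sub_cancel' hst]

namespace JoinedByChain

theorem refl (u : X) : JoinedByChain f δ 0 u u :=
  ⟨fun _ => u, rfl, rfl, fun _ _ ht => absurd ht (Nat.not_lt_zero _)⟩

theorem exists_shift {n : ℕ} {u v : X} (h : JoinedByChain f δ n u v) (s : ℕ) :
    ∃ g : ℕ → X, g s = u ∧ g (s + n) = v ∧ IsPseudoOrbitOn f δ g s (s + n) := by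
  obtain ⟨g, hg₀, hgn, hg⟩ := h
  refine ⟨fun t => g (t - s), by simpa using hg₀, by simpa using hgn, ?_⟩
  simpa only [zero_add, add_comm n] using hg.comp_sub s

theorem trans {m n : ℕ} {u v w : X} (h₁ : JoinedByChain f δ m u v)
    (h₂ : JoinedByChain f δ n v w) : JoinedByChain f δ (m + n) u w := by
  obtain ⟨g₁, hg₁₀, hg₁m, hg₁⟩ := h₁
  obtain ⟨g₂, hg₂m, hg₂n, hg₂⟩ := h₂.exists_shift m
  refine ⟨fun t => if t ≤ m then g₁ t else g₂ t, by simpa using hg₁₀, ?_,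
    hg₁.piecewise hg₂ (hg₁m.trans hg₂m.symm)⟩
  rcases Nat.eq_zero_or_pos n with rfl | hn
  · simpa [hg₁m] using hg₂m.symm.trans hg₂n
  · simpa [show ¬m + n ≤ m by omega] using hg₂n

theorem of_near_orbit {n : ℕ} {u v w : X} (hn : 0 < n) (hu : dist (f u) (f w) < δ / 2)
    (hv : dist (f^[n] w) v < δ / 2) : JoinedByChain f δ n u v := by
  have hδ : 0 < δ / 2 := dist_nonneg.trans_lt hu
  set g : ℕ → X := fun t => if t = 0 then u else if t = n then v else f^[t] w
  refine ⟨g, by simp [g], by simp [g, hn.ne'], fun t _ ht => ?_⟩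
  have h₁ : dist (f (g t)) (f^[t + 1] w) < δ / 2 := by
    by_cases ht₀ : t = 0
    · simpa [g, ht₀] using hu
    · simpa [g, ht₀, ht.ne, iterate_succ_apply'] using hδ
  have h₂ : dist (f^[t + 1] w) (g (t + 1)) < δ / 2 := by
    by_cases ht₁ : t + 1 = n
    · simpa [g, ht₁, hn.ne'] using hv
    · simpa [g, ht₁] using hδ
  calc dist (f (g t)) (g (t + 1))
        ≤ dist (f (g t)) (f^[t + 1] w) + dist (f^[t + 1] w) (g (t + 1)) := dist_triangle _ _ _
    _ < δ / 2 + δ / 2 := add_lt_add h₁ h₂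
    _ = δ := add_halves δ

end JoinedByChain

theorem AddSubmonoid.mem_of_mul_self_le {S : AddSubmonoid ℕ} {ℓ n : ℕ} (h₁ : ℓ ∈ S)
    (h₂ : ℓ + 1 ∈ S) (hn : ℓ * ℓ ≤ n) : n ∈ S := by
  have hdecomp : n = (n / ℓ - n % ℓ) • ℓ + (n % ℓ) • (ℓ + 1) := by
    rcases Nat.eq_zero_or_pos ℓ with rfl | hℓ
    · simp
    have hr : n % ℓ ≤ n / ℓ := (Nat.mod_lt n hℓ).le.trans ((Nat.le_div_iff_mul_le hℓ).2 hn)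
    have := Nat.mul_le_mul_right ℓ hr
    have := Nat.div_add_mod n ℓ
    simp only [smul_eq_mul, Nat.sub_mul, mul_add, mul_one, mul_comm ℓ] at *
    omega
  rw [hdecomp]
  exact S.add_mem (S.nsmul_mem h₁ _) (S.nsmul_mem h₂ _)

theorem JoinedByChain.of_loops {ℓ n : ℕ} {y : X} (h₁ : JoinedByChain f δ ℓ y y)
    (h₂ : JoinedByChain f δ (ℓ + 1) y y) (hn : ℓ * ℓ ≤ n) : JoinedByChain f δ n y y :=
  AddSubmonoid.mem_of_mul_self_le (S := ⟨⟨{n | JoinedByChain f δ n y y}, fun h h' => h.trans h'⟩,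
    JoinedByChain.refl y⟩) h₁ h₂ hn

end Chains

theorem WeaklyMixing.exists_iterate_mem_and_mem [TopologicalSpace X] {f : X → X}
    (hwm : WeaklyMixing f) {U₁ V₁ U₂ V₂ : Set X} (hU₁ : IsOpen U₁) (hU₁' : U₁.Nonempty)
    (hV₁ : IsOpen V₁) (hV₁' : V₁.Nonempty) (hU₂ : IsOpen U₂) (hU₂' : U₂.Nonempty)
    (hV₂ : IsOpen V₂) (hV₂' : V₂.Nonempty) :
    ∃ n, 1 ≤ n ∧ (∃ w ∈ U₁, f^[n] w ∈ V₁) ∧ ∃ w ∈ U₂, f^[n] w ∈ V₂ := by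
  obtain ⟨n, hn, _, ⟨w, hw, rfl⟩, hV⟩ := hwm (U₁ ×ˢ U₂) (V₁ ×ˢ V₂) (hU₁.prod hU₂)
    (hU₁'.prod hU₂') (hV₁.prod hV₂) (hV₁'.prod hV₂')
  change (Prod.map f f)^[n] w ∈ V₁ ×ˢ V₂ at hV
  rw [Prod.map_iterate] at hV
  exact ⟨n, hn, ⟨w.1, hw.1, hV.1⟩, w.2, hw.2, hV.2⟩

theorem WeaklyMixing.topTransitive [TopologicalSpace X] {f : X → X} (hwm : WeaklyMixing f) :
    TopTransitive f := fun U V hU hU' hV hV' => by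
  obtain ⟨u, hu⟩ := hU'
  obtain ⟨n, hn, ⟨w, hw, hwV⟩, -⟩ := hwm.exists_iterate_mem_and_mem hU ⟨u, hu⟩ hV hV'
    isOpen_univ ⟨u, mem_univ u⟩ isOpen_univ ⟨u, mem_univ u⟩
  exact ⟨n, hn, _, mem_image_of_mem _ hw, hwV⟩

section ChainMixing

variable [MetricSpace X] [CompactSpace X] {f : X → X} {δ : ℝ}

theorem TopTransitive.exists_joinedByChain_le (hf : Continuous f) (htr : TopTransitive f)
    (hδ : 0 < δ) : ∃ N, ∀ u v : X, ∃ n, 0 < n ∧ n ≤ N ∧ JoinedByChain f δ n u v := by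
  obtain ⟨η, hη, hfη⟩ := Metric.uniformContinuous_iff.1
    (CompactSpace.uniformContinuous_of_continuous hf) (δ / 2) (half_pos hδ)
  set ρ := min η (δ / 2) / 2 with hρ_def
  have hρ : 0 < ρ := by positivity
  have hρη : ρ + ρ ≤ η := by have := min_le_left η (δ / 2); linarith
  have hρδ : ρ + ρ ≤ δ / 2 := by have := min_le_right η (δ / 2); linarith
  obtain ⟨t, -, ht, hcover⟩ := finite_cover_balls_of_compact (isCompact_univ (X := X)) hρ
  have hreach : ∀ y y' : X, ∃ n, 1 ≤ n ∧ ∃ w ∈ Metric.ball y ρ, f^[n] w ∈ Metric.ball y' ρ :=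
    fun y y' => by
      obtain ⟨n, hn, _, ⟨w, hw, rfl⟩, hw'⟩ := htr _ _ Metric.isOpen_ball
        ⟨y, Metric.mem_ball_self hρ⟩ Metric.isOpen_ball ⟨y', Metric.mem_ball_self hρ⟩
      exact ⟨n, hn, w, hw, hw'⟩
  choose n hn w hw hw' using hreach
  obtain ⟨N, hN⟩ := ((ht.prod ht).image fun y => n y.1 y.2).bddAbove
  refine ⟨N, fun u v => ?_⟩
  obtain ⟨y, hy, hu⟩ := mem_iUnion₂.1 (hcover (mem_univ u))
  obtain ⟨y', hy', hv⟩ := mem_iUnion₂.1 (hcover (mem_univ v))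
  have hstart : dist u (w y y') < η :=
    calc dist u (w y y') ≤ dist u y + dist (w y y') y := dist_triangle_right _ _ _
      _ < ρ + ρ := add_lt_add hu (hw y y')
      _ ≤ η := hρη
  have hend : dist (f^[n y y'] (w y y')) v < δ / 2 :=
    calc dist (f^[n y y'] (w y y')) v ≤ dist (f^[n y y'] (w y y')) y' + dist v y' :=
          dist_triangle_right _ _ _
      _ < ρ + ρ := add_lt_add (hw' y y') hv
      _ ≤ δ / 2 := hρδ
  exact ⟨n y y', hn y y', hN ⟨(y, y'), ⟨hy, hy'⟩, rfl⟩,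
    JoinedByChain.of_near_orbit (hn y y') (hfη hstart) hend⟩

theorem WeaklyMixing.exists_loops (hf : Continuous f) (hwm : WeaklyMixing f) (hδ : 0 < δ)
    (y₀ : X) :
    ∃ ℓ, JoinedByChain f δ ℓ (f y₀) (f y₀) ∧ JoinedByChain f δ (ℓ + 1) (f y₀) (f y₀) := by
  obtain ⟨η, hη, hfη⟩ := Metric.uniformContinuous_iff.1
    (CompactSpace.uniformContinuous_of_continuous hf) (δ / 2) (half_pos hδ)
  set ρ := min η (δ / 2)
  have hρ : 0 < ρ := by positivity
  have hball : ∀ {w}, w ∈ Metric.ball (f y₀) ρ →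
      dist (f (f y₀)) (f w) < δ / 2 ∧ dist w (f y₀) < δ / 2 :=
    fun hw => ⟨hfη ((dist_comm _ _).trans_lt (hw.trans_le (min_le_left _ _))),
      hw.trans_le (min_le_right _ _)⟩
  obtain ⟨n, hn, ⟨w₁, hw₁, hw₁'⟩, w₂, hw₂, hw₂'⟩ := hwm.exists_iterate_mem_and_mem
    Metric.isOpen_ball ⟨_, Metric.mem_ball_self hρ⟩ Metric.isOpen_ball
    ⟨_, Metric.mem_ball_self hρ⟩ Metric.isOpen_ball ⟨_, Metric.mem_ball_self hρ⟩
    (Metric.isOpen_ball.preimage hf) ⟨y₀, Metric.mem_ball_self hρ⟩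
  refine ⟨n, .of_near_orbit hn (hball hw₁).1 (hball hw₁').2,
    .of_near_orbit n.succ_pos (hball hw₂).1 ?_⟩
  rw [iterate_succ_apply']
  exact (hball hw₂').2

theorem WeaklyMixing.exists_forall_ge_joinedByChain (hf : Continuous f) (hwm : WeaklyMixing f)
    (hδ : 0 < δ) : ∃ M, ∀ n ≥ M, ∀ u v : X, JoinedByChain f δ n u v := by
  rcases isEmpty_or_nonempty X with hX | ⟨⟨y₀⟩⟩
  · exact ⟨0, fun _ _ u => isEmptyElim u⟩
  obtain ⟨N, hN⟩ := hwm.topTransitive.exists_joinedByChain_le hf hδ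
  obtain ⟨ℓ, hℓ, hℓ'⟩ := hwm.exists_loops hf hδ y₀
  refine ⟨ℓ * ℓ + 2 * N, fun n hn u v => ?_⟩
  obtain ⟨m₁, -, hm₁, hu⟩ := hN u (f y₀)
  obtain ⟨m₂, -, hm₂, hv⟩ := hN (f y₀) v
  have hloop := JoinedByChain.of_loops hℓ hℓ' (n := n - m₁ - m₂) (by omega)
  simpa only [show m₁ + (n - m₁ - m₂) + m₂ = n by omega] using (hu.trans hloop).trans hv

end ChainMixing

section Specification

variable [MetricSpace X] {f : X → X} {δ : ℝ} {M k : ℕ} {x : ℕ → X} {a b : ℕ → ℕ}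

theorem monotoneOn_of_gaps (hab : ∀ i < k, a i ≤ b i)
    (hgap : ∀ i, i + 1 < k → b i + M ≤ a (i + 1)) : MonotoneOn b (Iio k) := by
  intro i _ j hj hij
  induction j, hij using Nat.le_induction with
  | base => exact le_rfl
  | succ j hij ih =>
    have := ih (by simp only [mem_Iio] at hj ⊢; omega)
    have := hgap j hj
    have := hab (j + 1) hj
    omega

theorem exists_pseudoOrbitOn_through_blocks (hδ : 0 < δ) (hM : 0 < M)
    (hjoin : ∀ n ≥ M, ∀ u v : X, JoinedByChain f δ n u v) (hab : ∀ i < k, a i ≤ b i)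
    (hgap : ∀ i, i + 1 < k → b i + M ≤ a (i + 1)) :
    ∀ i < k, ∃ c : ℕ → X, IsPseudoOrbitOn f δ c (a 0) (b i) ∧
      ∀ i' ≤ i, ∀ j, a i' ≤ j → j ≤ b i' → c j = f^[j] (x i') := by
  intro i
  induction i with
  | zero =>
    exact fun _ => ⟨fun t => f^[t] (x 0), .iterate hδ _ _ _,
      fun i' hi' _ _ _ => by rw [Nat.le_zero.1 hi']⟩
  | succ i ih =>
    intro hi
    obtain ⟨c, hc, hcx⟩ := ih (by omega)
    have hgapi := hgap i hi
    obtain ⟨g, hg₁, hg₂, hg⟩ := (hjoin (a (i + 1) - b i) (by omega) (f^[b i] (x i))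
      (f^[a (i + 1)] (x (i + 1)))).exists_shift (b i)
    rw [Nat.add_sub_cancel' (by omega)] at hg₂ hg
    have hci : c (b i) = f^[b i] (x i) := hcx i le_rfl (b i) (hab i (by omega)) le_rfl
    refine ⟨fun t => if t ≤ b i then c t else if t ≤ a (i + 1) then g t else f^[t] (x (i + 1)),
      hc.piecewise (hg.piecewise (.iterate hδ _ _ _) hg₂) ?_, fun i' hi' j hj₁ hj₂ => ?_⟩
    · rw [if_pos (by omega), hg₁, hci]
    by_cases hi'i : i' ≤ i
    · have := monotoneOn_of_gaps hab hgap (show i' < k by omega) (show i < k by omega) hi'i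
      simp only [if_pos (show j ≤ b i by omega)]
      exact hcx i' hi'i j hj₁ hj₂
    · obtain rfl : i' = i + 1 := by omega
      simp only [if_neg (show ¬j ≤ b i by omega)]
      split_ifs with hj
      · rw [le_antisymm hj hj₁, hg₂]
      · rfl

theorem exists_periodic_pseudoOrbit_through_blocks (hδ : 0 < δ) (hM : 0 < M)
    (hjoin : ∀ n ≥ M, ∀ u v : X, JoinedByChain f δ n u v) (hk : 0 < k)
    (hab : ∀ i < k, a i ≤ b i) (hgap : ∀ i, i + 1 < k → b i + M ≤ a (i + 1)) {p : ℕ}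
    (hp : M + b (k - 1) - a 0 ≤ p) :
    ∃ ξ : ℕ → X, IsPseudoOrbit f δ ξ ∧ Periodic ξ p ∧
      ∀ i < k, ∀ j, a i ≤ j → j ≤ b i → ξ j = f^[j] (x i) := by
  obtain ⟨c, hc, hcx⟩ := exists_pseudoOrbitOn_through_blocks (x := x) hδ hM hjoin hab hgap
    (k - 1) (by omega)
  have hb : ∀ i < k, b i ≤ b (k - 1) := fun i hi =>
    monotoneOn_of_gaps hab hgap hi (show k - 1 < k by omega) (by omega)
  have hab₀ : a 0 ≤ b (k - 1) := (hab 0 hk).trans (hb 0 hk)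
  obtain ⟨g, hg₁, hg₂, hg⟩ := (hjoin (a 0 + p - b (k - 1)) (by omega)
    (f^[b (k - 1)] (x (k - 1))) (f^[a 0] (x 0))).exists_shift (b (k - 1))
  rw [show b (k - 1) + (a 0 + p - b (k - 1)) = a 0 + p by omega] at hg₂ hg
  have hc₀ : c (a 0) = f^[a 0] (x 0) := hcx 0 (Nat.zero_le _) (a 0) le_rfl (hab 0 hk)
  have hck : c (b (k - 1)) = f^[b (k - 1)] (x (k - 1)) :=
    hcx (k - 1) le_rfl _ (hab _ (by omega)) le_rfl
  obtain ⟨ξ, hξ, hξp, hξc⟩ := (hc.piecewise hg (hck.trans hg₁.symm)).exists_periodic (by omega)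
    (by simp only [if_pos hab₀, if_neg (show ¬a 0 + p ≤ b (k - 1) by omega), hg₂, hc₀])
  refine ⟨ξ, hξ, hξp, fun i hi j hj₁ hj₂ => ?_⟩
  have ha : a 0 ≤ a i := by
    rcases Nat.eq_zero_or_pos i with rfl | hi₀
    · exact le_rfl
    · have := hgap (i - 1) (by omega)
      have := monotoneOn_of_gaps hab hgap hk (show i - 1 < k by omega) (Nat.zero_le _)
      have := hab 0 hk
      rw [Nat.sub_add_cancel hi₀] at *
      omega
  have := hb i hi
  rw [hξc j (by omega) (by omega), if_pos (by omega)]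
  exact hcx i (by omega) j hj₁ hj₂

end Specification

/-- Birkhoff recurrence: a minimal closed invariant subset of `K` (Zorn) is the orbit closure of
each of its points. -/
theorem exists_recurrentPt_mem [TopologicalSpace X] [CompactSpace X] {g : X → X}
    (hg : Continuous g) {K : Set X} (hK : IsClosed K) (hne : K.Nonempty) (hgK : MapsTo g K K) :
    ∃ z ∈ K, RecurrentPt g z := by
  let S : Set (Set X) := {C | C.Nonempty ∧ IsClosed C ∧ MapsTo g C C}
  have hchain : ∀ c ⊆ S, IsChain (· ⊆ ·) c → c.Nonempty → ∃ lb ∈ S, ∀ C ∈ c, lb ⊆ C := by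
    rintro c hcS hc ⟨C₀, hC₀⟩
    have : Nonempty c := ⟨⟨C₀, hC₀⟩⟩
    have hdir : DirectedOn (· ⊇ ·) c := fun C hC D hD =>
      (hc.total hC hD).elim (fun h => ⟨C, hC, subset_rfl, h⟩) fun h => ⟨D, hD, h, subset_rfl⟩
    refine ⟨⋂₀ c, ⟨?_, isClosed_sInter fun C hC => (hcS hC).2.1, fun y hy => ?_⟩,
      fun C hC => sInter_subset_of_mem hC⟩
    · exact IsCompact.nonempty_sInter_of_directed_nonempty_isCompact_isClosed hdir
        (fun C hC => (hcS hC).1) (fun C hC => (hcS hC).2.1.isCompact) (fun C hC => (hcS hC).2.1)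
    · exact mem_sInter.2 fun C hC => (hcS hC).2.2 (mem_sInter.1 hy C hC)
  obtain ⟨C, hCK, hC⟩ := zorn_superset_nonempty S hchain K ⟨hne, hK, hgK⟩
  obtain ⟨⟨z, hz⟩, hCc, hgC⟩ := hC.prop
  let O := closure (range fun n => g^[n + 1] z)
  have hOC : O ⊆ C :=
    closure_minimal (range_subset_iff.2 fun n => hgC.iterate (n + 1) hz) hCc
  have hgO : MapsTo g O O := by
    refine MapsTo.closure ?_ hg
    rintro _ ⟨n, rfl⟩
    exact ⟨n + 1, iterate_succ_apply' g (n + 1) z⟩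
  have hO : O ∈ S := ⟨⟨_, subset_closure ⟨0, rfl⟩⟩, isClosed_closure, hgO⟩
  have hzO : z ∈ O := hC.eq_of_subset hO hOC ▸ hz
  refine ⟨z, hCK hz, fun U hU => ?_⟩
  obtain ⟨_, hzU, n, rfl⟩ := mem_closure_iff_nhds.1 hzO U hU
  exact ⟨n + 1, Nat.le_add_left 1 n, hzU⟩

section Shadowing

variable [MetricSpace X] [CompactSpace X] {f : X → X}

theorem exists_recurrentPt_iterate_of_traces (hf : Continuous f) {ξ : ℕ → X} {q : ℕ}
    (hξ : Periodic ξ q) {e : ℝ} {w : X} (hw : Traces f e w ξ) :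
    ∃ z, (∀ t, dist (f^[t] z) (ξ t) ≤ e) ∧ RecurrentPt (f^[q]) z := by
  obtain ⟨z, hz, hrec⟩ := exists_recurrentPt_mem (hf.iterate q)
    (K := ⋂ t, {y | dist (f^[t] y) (ξ t) ≤ e})
    (isClosed_iInter fun t => isClosed_le ((hf.iterate t).dist continuous_const) continuous_const)
    ⟨w, mem_iInter.2 fun t => (hw t).le⟩ fun y hy => mem_iInter.2 fun t => by
      show dist (f^[t] (f^[q] y)) (ξ t) ≤ e
      rw [← iterate_add_apply, ← hξ t]
      exact mem_iInter.1 hy (t + q)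
  exact ⟨z, fun t => mem_iInter.1 hz t, hrec⟩

theorem HasShadowing.exists_recurrentPt_near_periodic (hsh : HasShadowing f) (hf : Continuous f)
    {e : ℝ} (he : 0 < e) :
    ∃ δ > 0, ∀ (ξ : ℕ → X) (q : ℕ), Periodic ξ q → IsPseudoOrbit f δ ξ →
      ∃ z, (∀ t, dist (f^[t] z) (ξ t) ≤ e) ∧ RecurrentPt (f^[q]) z := by
  obtain ⟨δ, hδ, hshδ⟩ := hsh e he
  refine ⟨δ, hδ, fun ξ q hξ hξδ => ?_⟩
  obtain ⟨w, hw⟩ := hshδ ξ hξδ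
  exact exists_recurrentPt_iterate_of_traces hf hξ hw

theorem HasShadowing.exists_recurrentPt_near_iterate_mod (hsh : HasShadowing f)
    (hf : Continuous f) {z : X} {q : ℕ} (hq : 0 < q) (hz : RecurrentPt (f^[q]) z) {e : ℝ}
    (he : 0 < e) :
    ∃ z' q', q ∣ q' ∧ 0 < q' ∧ RecurrentPt (f^[q']) z' ∧
      ∀ t, dist (f^[t] z') (f^[t % q'] z) ≤ e := by
  obtain ⟨δ, hδ, hshδ⟩ := hsh.exists_recurrentPt_near_periodic hf he
  obtain ⟨m, hm, hmz⟩ := hz (Metric.ball z δ) (Metric.ball_mem_nhds z hδ)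
  rw [← iterate_mul] at hmz
  have hqm : 0 < q * m := Nat.mul_pos hq hm
  obtain ⟨z', hz', hrec⟩ := hshδ (fun t => f^[t % (q * m)] z) (q * m)
    (fun t => by simp only [Nat.add_mod_right]) (isPseudoOrbit_iterate_mod hqm hδ hmz)
  exact ⟨z', q * m, dvd_mul_right q m, hqm, hrec, hz'⟩

end Shadowing

section Refinements

variable [MetricSpace X] {f : X → X} {Z : ℕ → X} {Q : ℕ → ℕ} {e : ℝ}

theorem dist_iterate_refinements_le (hQ : ∀ s, Q s ∣ Q (s + 1))
    (hZ : ∀ s t, dist (f^[t] (Z (s + 1))) (f^[t % Q (s + 1)] (Z s)) ≤ e / 2 ^ (s + 1))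
    (s n t : ℕ) :
    dist (f^[t] (Z (n + s + 1))) (f^[t % Q (s + 1)] (Z s)) ≤ e / 2 ^ s - e / 2 ^ (n + s + 1) := by
  induction n generalizing t with
  | zero =>
    convert hZ s t using 1
    · simp
    · rw [zero_add, pow_succ]
      ring
  | succ n ih =>
    have hdvd : Q (s + 1) ∣ Q (n + s + 1 + 1) :=
      Nat.rel_of_forall_rel_succ_of_le (· ∣ ·) hQ (by omega)
    calc dist (f^[t] (Z (n + 1 + s + 1))) (f^[t % Q (s + 1)] (Z s))
        ≤ dist (f^[t] (Z (n + s + 1 + 1))) (f^[t % Q (n + s + 1 + 1)] (Z (n + s + 1))) +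
          dist (f^[t % Q (n + s + 1 + 1)] (Z (n + s + 1)))
            (f^[t % Q (n + s + 1 + 1) % Q (s + 1)] (Z s)) := by
          rw [Nat.mod_mod_of_dvd t hdvd, show n + 1 + s + 1 = n + s + 1 + 1 by omega]
          exact dist_triangle _ _ _
      _ ≤ e / 2 ^ (n + s + 1 + 1) + (e / 2 ^ s - e / 2 ^ (n + s + 1)) :=
          add_le_add (hZ _ t) (ih _)
      _ = e / 2 ^ s - e / 2 ^ (n + 1 + s + 1) := by
          rw [show n + 1 + s + 1 = n + s + 1 + 1 by omega, pow_succ _ (n + s + 1)]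
          ring

/-- At time `0` and at the multiples of `Q (s + 1)` the limit is `e / 2 ^ s`-close to `Z s`, so it
returns within `2 * e / 2 ^ s` of itself along those multiples. -/
theorem exists_regRecPt_of_refinements [CompleteSpace X] (hf : Continuous f)
    (hQ₀ : ∀ s, 0 < Q s) (hQ : ∀ s, Q s ∣ Q (s + 1))
    (hZ : ∀ s t, dist (f^[t] (Z (s + 1))) (f^[t % Q (s + 1)] (Z s)) ≤ e / 2 ^ (s + 1)) :
    ∃ z, RegRecPt f z ∧ ∀ s t, dist (f^[t] z) (f^[t % Q (s + 1)] (Z s)) ≤ e / 2 ^ s := by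
  have he : 0 ≤ e := by
    have := dist_nonneg.trans (hZ 0 0)
    norm_num at this
    linarith
  have hcauchy : CauchySeq Z := cauchySeq_of_le_geometric_two (C := e) fun s => by
    simpa [dist_comm, pow_succ, div_div, mul_comm] using hZ s 0
  obtain ⟨z, hz⟩ := cauchySeq_tendsto_of_complete hcauchy
  have hclose : ∀ s t, dist (f^[t] z) (f^[t % Q (s + 1)] (Z s)) ≤ e / 2 ^ s := fun s t =>
    le_of_tendsto (((hf.iterate t).tendsto z).comp
      (hz.comp (Filter.tendsto_add_atTop_nat (s + 1))) |>.dist tendsto_const_nhds)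
      (Filter.Eventually.of_forall fun n =>
        (dist_iterate_refinements_le hQ hZ s n t).trans (sub_le_self _ (by positivity)))
  refine ⟨z, fun U hU => ?_, hclose⟩
  obtain ⟨r, hr, hball⟩ := Metric.mem_nhds_iff.1 hU
  obtain ⟨s, hs⟩ := ((tendsto_const_nhds (x := e)).div_atTop
    (tendsto_pow_atTop_atTop_of_one_lt one_lt_two)).eventually (gt_mem_nhds (half_pos hr))
    |>.exists
  refine ⟨Q (s + 1), hQ₀ _, fun n => hball ?_⟩
  calc dist (f^[Q (s + 1) * n] z) z ≤ dist (f^[Q (s + 1) * n] z) (Z s) + dist z (Z s) :=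
        dist_triangle_right _ _ _
    _ ≤ e / 2 ^ s + e / 2 ^ s :=
        add_le_add (by simpa using hclose s (Q (s + 1) * n)) (by simpa using hclose s 0)
    _ < r := by linarith

end Refinements

theorem HasShadowing.exists_regRecPt_near [MetricSpace X] [CompactSpace X] {f : X → X}
    (hsh : HasShadowing f) (hf : Continuous f) {z₀ : X} {p : ℕ} (hp : 0 < p)
    (hz₀ : RecurrentPt (f^[p]) z₀) {e : ℝ} (he : 0 < e) :
    ∃ z q, p ∣ q ∧ RegRecPt f z ∧ ∀ t, dist (f^[t] z) (f^[t % q] z₀) ≤ e := by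
  have hstep : ∀ (s : ℕ) (d : X × ℕ), 0 < d.2 → RecurrentPt (f^[d.2]) d.1 →
      ∃ d' : X × ℕ, (0 < d'.2 ∧ RecurrentPt (f^[d'.2]) d'.1) ∧ d.2 ∣ d'.2 ∧
        ∀ t, dist (f^[t] d'.1) (f^[t % d'.2] d.1) ≤ e / 2 ^ (s + 1) := fun s d hd hrec => by
    obtain ⟨z', q', hdvd, hq', hrec', hclose⟩ :=
      hsh.exists_recurrentPt_near_iterate_mod hf hd hrec (e := e / 2 ^ (s + 1)) (by positivity)
    exact ⟨(z', q'), ⟨hq', hrec'⟩, hdvd, hclose⟩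
  choose! next hnext using hstep
  let D : ℕ → X × ℕ := fun s => Nat.rec (z₀, p) (fun s d => next s d) s
  have hD : ∀ s, 0 < (D s).2 ∧ RecurrentPt (f^[(D s).2]) (D s).1 := fun s => by
    induction s with
    | zero => exact ⟨hp, hz₀⟩
    | succ s ih => exact (hnext s _ ih.1 ih.2).1
  obtain ⟨z, hz, hclose⟩ := exists_regRecPt_of_refinements (Z := fun s => (D s).1) hf
    (fun s => (hD s).1) (fun s => (hnext s _ (hD s).1 (hD s).2).2.1)
    (fun s => (hnext s _ (hD s).1 (hD s).2).2.2)
  refine ⟨z, (D 1).2, (hnext 0 _ hp hz₀).2.1, hz, fun t => ?_⟩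
  have := hclose 0 t
  rwa [pow_zero, div_one] at this

theorem HasShadowing.exists_regRecPt_near_periodic [MetricSpace X] [CompactSpace X]
    {f : X → X} (hsh : HasShadowing f) (hf : Continuous f) {e : ℝ} (he : 0 < e) :
    ∃ δ > 0, ∀ (ξ : ℕ → X) (p : ℕ), 0 < p → Periodic ξ p → IsPseudoOrbit f δ ξ →
      ∃ z, RegRecPt f z ∧ ∀ t, dist (f^[t] z) (ξ t) < e := by
  obtain ⟨δ, hδ, hshadow⟩ := hsh.exists_recurrentPt_near_periodic hf (half_pos he)
  refine ⟨δ, hδ, fun ξ p hp hξp hξ => ?_⟩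
  obtain ⟨z₀, hz₀ξ, hz₀⟩ := hshadow ξ p hξp hξ
  obtain ⟨z, q, ⟨c, rfl⟩, hz, hzz₀⟩ := hsh.exists_regRecPt_near hf hp hz₀
    (e := e / 4) (by positivity)
  have hξpc : Periodic ξ (p * c) := by simpa [mul_comm] using hξp.nat_mul c
  refine ⟨z, hz, fun t => ?_⟩
  calc dist (f^[t] z) (ξ t)
      ≤ dist (f^[t] z) (f^[t % (p * c)] z₀) + dist (f^[t % (p * c)] z₀) (ξ (t % (p * c))) := by
        rw [hξpc.map_mod_nat]
        exact dist_triangle _ _ _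
    _ ≤ e / 4 + e / 2 := add_le_add (hzz₀ t) (hz₀ξ _)
    _ < e := by linarith

theorem weak_mixing_shadowing_regrec_specification [MetricSpace X] [CompactSpace X]
    (f : X → X) (hf : Continuous f) (hwm : WeaklyMixing f) (hsh : HasShadowing f) :
    ∀ ε > (0 : ℝ), ∃ M : ℕ, 0 < M ∧
      ∀ k : ℕ, 2 ≤ k → ∀ x : ℕ → X, ∀ a b : ℕ → ℕ,
        (∀ i < k, a i ≤ b i) →
        (∀ i, i + 1 < k → b i + M ≤ a (i + 1)) →
        ∀ p : ℕ, M + b (k - 1) - a 0 ≤ p →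
        ∃ z : X, RegRecPt f z ∧
          (∀ n j : ℕ, dist (f^[j] z) (f^[n * p + j] z) < ε) ∧
          (∀ i < k, ∀ j : ℕ, a i ≤ j → j ≤ b i → ∀ n : ℕ,
            dist (f^[n * p + j] z) (f^[j] (x i)) < ε) := by
  intro ε hε
  obtain ⟨δ, hδ, hshadow⟩ := hsh.exists_regRecPt_near_periodic hf (half_pos hε)
  obtain ⟨M, hM⟩ := hwm.exists_forall_ge_joinedByChain hf hδ
  refine ⟨M + 1, M.succ_pos, fun k hk x a b hab hgap p hp => ?_⟩
  obtain ⟨ξ, hξ, hξp, hξx⟩ := exists_periodic_pseudoOrbit_through_blocks hδ M.succ_pos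
    (fun n hn => hM n (by omega)) (by omega) hab hgap hp
  have hp₀ : 0 < p := by
    have := monotoneOn_of_gaps hab hgap (show 0 < k by omega) (show k - 1 < k by omega)
      (Nat.zero_le _)
    have := hab 0 (by omega)
    omega
  obtain ⟨z, hz, hzξ⟩ := hshadow ξ p hp₀ hξp hξ
  have hξnp : ∀ n j, ξ (n * p + j) = ξ j := fun n j => by
    simpa [add_comm] using hξp.nat_mul n j
  refine ⟨z, hz, fun n j => ?_, fun i hi j hj₁ hj₂ n => ?_⟩
  · calc dist (f^[j] z) (f^[n * p + j] z)
          ≤ dist (f^[j] z) (ξ j) + dist (f^[n * p + j] z) (ξ j) := dist_triangle_right _ _ _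
      _ < ε / 2 + ε / 2 := add_lt_add (hzξ j) (hξnp n j ▸ hzξ _)
      _ = ε := add_halves ε
  · rw [← hξx i hi j hj₁ hj₂, ← hξnp n j]
    exact (hzξ _).trans (half_lt_self hε)
end

section
/- Let (X_n, f_n), n ≥ 1, be a sequence of dynamical systems on compact metric spaces of diameter at most 1, each strongly mixing, each with the shadowing property, and such that f_n has no point of period n. Then the product system (∏_{n≥1} X_n, ∏_{n≥1} f_n) with the metric d(x,y) = Σ 2^{-n} d_n(x_n, y_n) is strongly mixing, has the shadowing property, and has no periodic points. -/
open Set Function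

variable {X : Type*}

/-! Mixing of a product is tested on open boxes, which constrain only finitely many coordinates;
there the factor systems are mixing from a common time on, and the free coordinates are filled
in arbitrarily. For shadowing, the coordinates beyond `M` contribute at most `2⁻ᴹ` to the weighted
distance, so it suffices to shadow the first `M` coordinates, each of which is a pseudo-orbit of
its own factor. A point of period `p` would be a point of period `p` of the factor `g (p - 1)`. -/

open Filter Topology

theorem Pi.map_iterate_apply {ι : Type*} {Y : ι → Type*} (g : ∀ i, Y i → Y i) (k : ℕ)
    (x : ∀ i, Y i) (i : ι) : (Pi.map g)^[k] x i = (g i)^[k] (x i) := by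
  induction k generalizing x with
  | zero => rfl
  | succ k ih => exact ih (Pi.map g x)

theorem Pi.map_iterate_ne_self {ι : Type*} {Y : ι → Type*} {g : ∀ i, Y i → Y i} {k : ℕ}
    (i : ι) (h : ∀ y, (g i)^[k] y ≠ y) (x : ∀ i, Y i) : (Pi.map g)^[k] x ≠ x := fun hx =>
  h (x i) (by rw [← Pi.map_iterate_apply, hx])

theorem StronglyMixing.eventually_exists_iterate_mem {Y : Type*} [TopologicalSpace Y]
    {g : Y → Y} (hg : StronglyMixing g) {U V : Set Y} (hU : IsOpen U) (hUne : U.Nonempty)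
    (hV : IsOpen V) (hVne : V.Nonempty) : ∀ᶠ n in atTop, ∃ x ∈ U, g^[n] x ∈ V := by
  obtain ⟨N, hN⟩ := hg U V hU hUne hV hVne
  filter_upwards [eventually_ge_atTop N] with n hn
  obtain ⟨_, ⟨x, hx, rfl⟩, hxV⟩ := hN n hn
  exact ⟨x, hx, hxV⟩

section Pi

variable {ι : Type*} {Y : ι → Type*} [∀ i, TopologicalSpace (Y i)]

theorem exists_univ_pi_subset_of_isOpen {U : Set (∀ i, Y i)} (hU : IsOpen U) {p : ∀ i, Y i}
    (hp : p ∈ U) : ∃ I : Finset ι, ∃ u : ∀ i, Set (Y i), (∀ i, IsOpen (u i) ∧ p i ∈ u i) ∧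
      (∀ i ∉ I, u i = univ) ∧ univ.pi u ⊆ U := by
  classical
  obtain ⟨I, u, hu, huU⟩ := isOpen_pi_iff.1 hU p hp
  refine ⟨I, fun i => if i ∈ I then u i else univ, fun i => ?_, fun i hi => if_neg hi, ?_⟩
  · by_cases hi : i ∈ I
    · simpa only [if_pos hi] using hu i hi
    · simp only [if_neg hi, isOpen_univ, mem_univ, and_self]
  · intro x hx
    exact huU fun i hi => by simpa only [if_pos (Finset.mem_coe.1 hi)] using hx i (mem_univ i)

theorem StronglyMixing.pi {g : ∀ i, Y i → Y i} (hg : ∀ i, StronglyMixing (g i)) :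
    StronglyMixing (Pi.map g) := by
  intro U V hU ⟨p, hp⟩ hV ⟨q, hq⟩
  obtain ⟨-, u, hu, -, huU⟩ := exists_univ_pi_subset_of_isOpen hU hp
  obtain ⟨J, v, hv, hvJ, hvV⟩ := exists_univ_pi_subset_of_isOpen hV hq
  have hcoord : ∀ᶠ n in atTop, ∀ i, ∃ a ∈ u i, (g i)^[n] a ∈ v i := by
    filter_upwards [(eventually_all_finset J).2 fun i _ =>
      (hg i).eventually_exists_iterate_mem (hu i).1 ⟨_, (hu i).2⟩ (hv i).1 ⟨_, (hv i).2⟩]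
      with n hn i
    by_cases hi : i ∈ J
    · exact hn i hi
    · exact ⟨p i, (hu i).2, by simp only [hvJ i hi, mem_univ]⟩
  obtain ⟨N, hN⟩ := eventually_atTop.1 hcoord
  refine ⟨N, fun n hn => ?_⟩
  choose a ha hga using hN n hn
  refine ⟨(Pi.map g)^[n] a, ⟨a, huU fun i _ => ha i, rfl⟩, hvV fun i _ => ?_⟩
  rw [Pi.map_iterate_apply]
  exact hga i

end Pi

theorem tsum_half_pow_succ : ∑' n : ℕ, (1 / 2 : ℝ) ^ (n + 1) = 1 := by
  rw [tsum_congr fun n => pow_succ (1 / 2 : ℝ) n, tsum_mul_right, tsum_geometric_two]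
  norm_num

theorem summable_half_pow_succ : Summable fun n : ℕ => (1 / 2 : ℝ) ^ (n + 1) := by
  simpa only [pow_succ] using summable_geometric_two.mul_right (1 / 2 : ℝ)

section WeightedDist

variable {Y : ℕ → Type*} [∀ n, PseudoMetricSpace (Y n)]

noncomputable def weightedDist (x y : ∀ n, Y n) : ℝ :=
  ∑' n : ℕ, (1 / 2 : ℝ) ^ (n + 1) * dist (x n) (y n)

theorem summable_weightedDist (hdiam : ∀ n, ∀ a b : Y n, dist a b ≤ 1) (x y : ∀ n, Y n) :
    Summable fun n : ℕ => (1 / 2 : ℝ) ^ (n + 1) * dist (x n) (y n) :=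
  summable_half_pow_succ.of_nonneg_of_le (fun _ => by positivity)
    fun n => mul_le_of_le_one_right (by positivity) (hdiam n _ _)

theorem dist_lt_of_weightedDist_lt (hdiam : ∀ n, ∀ a b : Y n, dist a b ≤ 1) {x y : ∀ n, Y n}
    {M n : ℕ} {δ : ℝ} (hn : n < M) (h : weightedDist x y < (1 / 2) ^ M * δ) :
    dist (x n) (y n) < δ := by
  have hcoord : (1 / 2 : ℝ) ^ (n + 1) * dist (x n) (y n) ≤ weightedDist x y :=
    (summable_weightedDist hdiam x y).le_tsum n fun _ _ => by positivity
  have hweight : (1 / 2 : ℝ) ^ M ≤ (1 / 2) ^ (n + 1) :=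
    pow_le_pow_of_le_one (by norm_num) (by norm_num) hn
  by_contra! hδ
  nlinarith [dist_nonneg (x := x n) (y := y n), pow_pos (by norm_num : (0 : ℝ) < 1 / 2) M]

theorem weightedDist_le_of_dist_le (hdiam : ∀ n, ∀ a b : Y n, dist a b ≤ 1) {x y : ∀ n, Y n}
    {M : ℕ} {c : ℝ} (hc : 0 ≤ c) (h : ∀ n < M, dist (x n) (y n) ≤ c) :
    weightedDist x y ≤ c + (1 / 2) ^ M := by
  set f := fun n : ℕ => (1 / 2 : ℝ) ^ (n + 1) * dist (x n) (y n)
  have hhead : ∑ n ∈ Finset.range M, f n ≤ c :=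
    calc ∑ n ∈ Finset.range M, f n ≤ ∑ n ∈ Finset.range M, (1 / 2 : ℝ) ^ (n + 1) * c :=
          Finset.sum_le_sum fun n hn => mul_le_mul_of_nonneg_left (h n (Finset.mem_range.1 hn))
            (by positivity)
      _ = (∑ n ∈ Finset.range M, (1 / 2 : ℝ) ^ (n + 1)) * c := (Finset.sum_mul ..).symm
      _ ≤ 1 * c := by
          gcongr
          exact (summable_half_pow_succ.sum_le_tsum _ fun _ _ => by positivity).trans_eq
            tsum_half_pow_succ
      _ = c := one_mul c
  have htail : ∑' k, f (k + M) ≤ (1 / 2) ^ M :=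
    calc ∑' k, f (k + M) ≤ ∑' k : ℕ, (1 / 2 : ℝ) ^ (k + 1) * (1 / 2) ^ M :=
          ((summable_nat_add_iff M).2 (summable_weightedDist hdiam x y)).tsum_le_tsum
            (fun k => by simpa only [f, ← pow_add, add_right_comm] using
              mul_le_of_le_one_right (by positivity) (hdiam (k + M) (x (k + M)) (y (k + M))))
            (summable_half_pow_succ.mul_right _)
      _ = (1 / 2) ^ M := by rw [tsum_mul_right, tsum_half_pow_succ, one_mul]
  rw [weightedDist, ← (summable_weightedDist hdiam x y).sum_add_tsum_nat_add M]
  linarith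

end WeightedDist

theorem HasShadowing.weightedDist_pi {Y : ℕ → Type*} [∀ n, MetricSpace (Y n)]
    {g : ∀ n, Y n → Y n} (hdiam : ∀ n, ∀ a b : Y n, dist a b ≤ 1)
    (hg : ∀ n, HasShadowing (g n)) :
    ∀ ε > (0 : ℝ), ∃ δ > (0 : ℝ), ∀ x : ℕ → ∀ n, Y n,
      (∀ k, weightedDist (Pi.map g (x k)) (x (k + 1)) < δ) →
      ∃ z, ∀ k, weightedDist ((Pi.map g)^[k] z) (x k) < ε := by
  intro ε hε
  obtain ⟨M, hM⟩ := exists_pow_lt_of_lt_one (half_pos hε) (by norm_num : (1 / 2 : ℝ) < 1)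
  choose δ hδ hshad using fun n => hg n (ε / 2) (half_pos hε)
  obtain ⟨δ₀, hδ₀δ, hδ₀⟩ : ∃ δ₀, (∀ n ∈ Finset.range M, δ₀ < δ n) ∧ 0 < δ₀ :=
    (((eventually_all_finset _).2 fun n _ =>
      eventually_nhdsWithin_of_eventually_nhds (eventually_lt_nhds (hδ n))).and
        self_mem_nhdsWithin).exists (f := 𝓝[>] (0 : ℝ))
  refine ⟨(1 / 2) ^ M * δ₀, by positivity, fun x hx => ?_⟩
  have hpseudo (n : ℕ) (hn : n < M) : IsPseudoOrbit (g n) (δ n) fun k => x k n := fun k =>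
    (dist_lt_of_weightedDist_lt hdiam hn (hx k)).trans (hδ₀δ n (Finset.mem_range.2 hn))
  have htrace (n : ℕ) : ∃ z : Y n, n < M → Traces (g n) (ε / 2) z fun k => x k n := by
    by_cases hn : n < M
    · obtain ⟨z, hz⟩ := hshad n _ (hpseudo n hn)
      exact ⟨z, fun _ => hz⟩
    · exact ⟨x 0 n, fun h => absurd h hn⟩
  choose z hz using htrace
  refine ⟨z, fun k => ?_⟩
  calc weightedDist ((Pi.map g)^[k] z) (x k) ≤ ε / 2 + (1 / 2) ^ M :=
        weightedDist_le_of_dist_le hdiam (half_pos hε).le fun n hn => by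
          rw [Pi.map_iterate_apply]
          exact (hz n hn k).le
    _ < ε := by linarith

theorem product_system_mixing_shadowing_no_periodic_points_general
    {Y : ℕ → Type*} [∀ n, MetricSpace (Y n)]
    (g : ∀ n, Y n → Y n)
    (hdiam : ∀ n, ∀ x y : Y n, dist x y ≤ 1)
    (hmix : ∀ n, StronglyMixing (g n))
    (hshad : ∀ n, HasShadowing (g n))
    (hnoper : ∀ n : ℕ, ∀ y : Y n, (g n)^[n + 1] y ≠ y)
    (F : (∀ n, Y n) → (∀ n, Y n)) (hF : F = fun x n => g n (x n))
    (D : (∀ n, Y n) → (∀ n, Y n) → ℝ)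
    (hD : ∀ x y : ∀ n, Y n, D x y = ∑' n : ℕ, (1 / 2 : ℝ) ^ (n + 1) * dist (x n) (y n)) :
    StronglyMixing F ∧
    (∀ ε > (0 : ℝ), ∃ δ > (0 : ℝ), ∀ x : ℕ → (∀ n, Y n),
      (∀ n : ℕ, D (F (x n)) (x (n + 1)) < δ) →
      ∃ z : ∀ n, Y n, ∀ n : ℕ, D (F^[n] z) (x n) < ε) ∧
    (∀ x : ∀ n, Y n, ∀ p : ℕ, 1 ≤ p → F^[p] x ≠ x) := by
  obtain rfl : F = Pi.map g := hF
  obtain rfl : D = weightedDist := funext₂ hD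
  refine ⟨StronglyMixing.pi hmix, HasShadowing.weightedDist_pi hdiam hshad, fun x p hp => ?_⟩
  obtain ⟨n, rfl⟩ := Nat.exists_eq_add_of_le' hp
  exact Pi.map_iterate_ne_self n (hnoper n) x

theorem product_system_mixing_shadowing_no_periodic_points
    {Y : ℕ → Type*} [∀ n, MetricSpace (Y n)] [∀ n, CompactSpace (Y n)]
    (g : ∀ n, Y n → Y n) (hg : ∀ n, Continuous (g n))
    (hdiam : ∀ n, ∀ x y : Y n, dist x y ≤ 1)
    (hmix : ∀ n, StronglyMixing (g n))
    (hshad : ∀ n, HasShadowing (g n))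
    (hnoper : ∀ n : ℕ, ∀ y : Y n, (g n)^[n + 1] y ≠ y)
    (F : (∀ n, Y n) → (∀ n, Y n)) (hF : F = fun x n => g n (x n))
    (D : (∀ n, Y n) → (∀ n, Y n) → ℝ)
    (hD : ∀ x y : ∀ n, Y n, D x y = ∑' n : ℕ, (1 / 2 : ℝ) ^ (n + 1) * dist (x n) (y n)) :
    StronglyMixing F ∧
    (∀ ε > (0 : ℝ), ∃ δ > (0 : ℝ), ∀ x : ℕ → (∀ n, Y n),
      (∀ n : ℕ, D (F (x n)) (x (n + 1)) < δ) →
      ∃ z : ∀ n, Y n, ∀ n : ℕ, D (F^[n] z) (x n) < ε) ∧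
    (∀ x : ∀ n, Y n, ∀ p : ℕ, 1 ≤ p → F^[p] x ≠ x) :=
  product_system_mixing_shadowing_no_periodic_points_general g hdiam hmix hshad hnoper F hF D hD
end
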